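/- Let p be a prime, 0 ≤ n < m, k ≥ 1, and let χ1,…,χk be characters mod p^m with χ_k primitive mod p^m. If χ1⋯χk is not induced by any character mod p^{m−n}, then J_{p^n}(χ1,…,χk,p^m) = 0. -/

import Mathlib

/-! If a unit `u` fixes `B`, substituting `xᵢ ↦ u xᵢ` permutes the solutions of
`x₁ + ⋯ + x_k = B` and multiplies every term of `J_B` by `(χ₁⋯χ_k)(u)`; hence `J_B = 0` as soon as
some such `u` has `(χ₁⋯χ_k)(u) ≠ 1`. If `χ₁⋯χ_k` does not factor through `p^(m-n)`, there is a
unit `u ≡ 1 (mod p^(m-n))` with `(χ₁⋯χ_k)(u) ≠ 1`, and every such `u` fixes `p^n`. -/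

open Complex

/-- The generalized Jacobi sum `J_B(χ₁,…,χ_k, q)`. -/
noncomputable def Jsum {q : ℕ} [NeZero q] {k : ℕ}
    (χ : Fin k → DirichletCharacter ℂ q) (B : ZMod q) : ℂ :=
  ∑ x : Fin k → ZMod q, if (∑ i, x i) = B then ∏ i, χ i (x i) else 0

open Finset

lemma MulChar.prod_apply_unit {R R' ι : Type*} [CommMonoid R] [CommMonoidWithZero R']
    (s : Finset ι) (χ : ι → MulChar R R') (u : Rˣ) :
    (∏ i ∈ s, χ i) u = ∏ i ∈ s, χ i u := by
  induction s using Finset.cons_induction with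
  | empty => simp
  | cons a s ha ih => simp [prod_cons, MulChar.coeToFun_mul, ih]

lemma ZMod.unit_mul_eq_of_unitsMap_eq_one {q d : ℕ} (hd : d ∣ q) {u : (ZMod q)ˣ}
    (hu : ZMod.unitsMap hd u = 1) {B : ZMod q} (hB : (d : ZMod q) * B = 0) : u * B = B := by
  rw [← Units.val_inj, Units.val_one, ZMod.unitsMap_def, Units.coe_map, MonoidHom.coe_coe,
    ZMod.castHom_apply] at hu
  obtain ⟨t, ht⟩ : (d : ℤ) ∣ ((u : ZMod q).cast : ℤ) - 1 := by
    rw [← ZMod.intCast_zmod_eq_zero_iff_dvd, Int.cast_sub, ZMod.intCast_cast, hu]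
    simp
  have hu' : (u : ZMod q) = 1 + d * t := by
    have := congrArg (fun z : ℤ => (z : ZMod q)) ht
    simp only [Int.cast_sub, ZMod.intCast_cast, ZMod.cast_id', id, Int.cast_one, Int.cast_mul,
      Int.cast_natCast] at this
    linear_combination this
  rw [hu']
  linear_combination t * hB

lemma DirichletCharacter.exists_unit_apply_ne_one_of_not_factorsThrough {R : Type*}
    [CommMonoidWithZero R] {q d : ℕ} [NeZero q] {ψ : DirichletCharacter R q} (hd : d ∣ q) (h : ¬ ψ.FactorsThrough d) :
    ∃ u : (ZMod q)ˣ, ZMod.unitsMap hd u = 1 ∧ ψ u ≠ 1 := by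
  rw [factorsThrough_iff_ker_unitsMap hd, SetLike.le_def] at h
  simp only [not_forall] at h
  obtain ⟨u, hu, hψu⟩ := h
  refine ⟨u, hu, fun h1 => hψu ?_⟩
  rw [MonoidHom.mem_ker, ← Units.val_inj, MulChar.coe_toUnitHom, h1, Units.val_one]

section Jsum

variable {q k : ℕ} [NeZero q] (χ : Fin k → DirichletCharacter ℂ q)

lemma prod_apply_unit_mul_Jsum {u : (ZMod q)ˣ} {B : ZMod q} (hB : u * B = B) :
    (∏ i, χ i u) * Jsum χ B = Jsum χ B := by
  rw [Jsum, mul_sum]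
  refine Fintype.sum_equiv (Equiv.piCongrRight fun _ => Units.mulLeft u) _ _ fun x => ?_
  simp only [Equiv.piCongrRight_apply, Units.mulLeft_apply]
  have hsum : ∑ i, u * x i = B ↔ ∑ i, x i = B := by
    rw [← mul_sum]
    conv_lhs => rw [← hB]
    exact u.mul_right_inj
  split_ifs <;> simp_all [prod_mul_distrib]

lemma Jsum_eq_zero_of_unit_mul_eq {u : (ZMod q)ˣ} {B : ZMod q} (hB : u * B = B)
    (hχu : ∏ i, χ i u ≠ 1) : Jsum χ B = 0 :=
  (mul_left_eq_self₀.mp (prod_apply_unit_mul_Jsum χ hB)).resolve_left hχu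

end Jsum

theorem stmt14 {p m n k : ℕ} [NeZero (p ^ m)]
    (χ : Fin (k + 1) → DirichletCharacter ℂ (p ^ m))
    -- χ₁⋯χ_k is not induced by any character mod p^(m-n)
    (h : ¬ (∏ i, χ i).FactorsThrough (p ^ (m - n))) :
    Jsum χ ((p ^ n : ℕ) : ZMod (p ^ m)) = 0 := by
  have hd : p ^ (m - n) ∣ p ^ m := pow_dvd_pow p (Nat.sub_le m n)
  obtain ⟨u, hu, hχu⟩ := DirichletCharacter.exists_unit_apply_ne_one_of_not_factorsThrough hd h
  have hpn : ((p ^ (m - n) : ℕ) : ZMod (p ^ m)) * (p ^ n : ℕ) = 0 := by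
    rw [← Nat.cast_mul, ← pow_add, ZMod.natCast_eq_zero_iff]
    exact pow_dvd_pow p (by omega)
  refine Jsum_eq_zero_of_unit_mul_eq χ (ZMod.unit_mul_eq_of_unitsMap_eq_one hd hu hpn) ?_
  rwa [← MulChar.prod_apply_unit]
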